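/- arXiv:1701.08185 — 2 statements merged into one kernel-verified Lean document; each statement's English description precedes it below -/
import Mathlib

section
/- Let A be a real n×n positive definite matrix, let B be a real n×k matrix of rank k, let C be a real n×m matrix of rank m (with k ≤ m ≤ n), and suppose there exists a real m×k matrix M such that B = C·M. Then the matrix C (CᵀAC)⁻¹ Cᵀ − B (BᵀAB)⁻¹ Bᵀ is positive semidefinite; that is, B (BᵀAB)⁻¹ Bᵀ ≤ C (CᵀAC)⁻¹ Cᵀ in the Loewner order. -/
/-!
For a full-rank `X`, write `Q_X = X (Xᴴ A X)⁻¹ Xᴴ`; then `Q_X A` is the `A`-orthogonal projection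
onto the column space of `X`, i.e. `Q_X A Y = Y` whenever `Y = X Z`. As the columns of `B = C M`
lie in the column space of `C`, this gives `Q_C A Q_B = Q_B`, and together with `Q_B A Q_B = Q_B`,
`Q_C A Q_C = Q_C` it shows that the Hermitian matrix `D = Q_C - Q_B` satisfies `D = Dᴴ A D`,
which is positive semidefinite because `A` is.
-/

open Matrix

namespace Matrix

theorem mulVec_injective_of_rank_eq_card {K m n : Type*} [Field K] [Fintype n]
    {X : Matrix m n K} (hX : X.rank = Fintype.card n) : Function.Injective X.mulVec :=
  mulVec_injective_iff.mpr <| linearIndependent_iff_card_eq_finrank_span.mpr <| by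
    rw [Set.finrank, ← rank_eq_finrank_span_cols, hX]

theorem posSemidef_sub_of_mul_mul_eq {R n : Type*} [Ring R] [PartialOrder R] [StarRing R]
    [Fintype n] {A P Q : Matrix n n R} (hA : A.PosSemidef) (hP : P.IsHermitian)
    (hQ : Q.IsHermitian) (hPP : P * A * P = P) (hQQ : Q * A * Q = Q) (hQP : Q * A * P = P) :
    (Q - P).PosSemidef := by
  have hPQ : P * A * Q = P := by
    simpa only [conjTranspose_mul, hP.eq, hQ.eq, hA.isHermitian.eq, Matrix.mul_assoc]
      using congrArg conjTranspose hQP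
  have hD : (Q - P)ᴴ * A * (Q - P) = Q - P := by
    rw [conjTranspose_sub, hP.eq, hQ.eq]
    simp only [Matrix.sub_mul, Matrix.mul_sub, hPP, hQQ, hPQ, hQP]
    abel
  exact hD ▸ hA.conjTranspose_mul_mul_same (Q - P)

section AsymptoticCovariance

variable {R : Type*} [CommRing R] [StarRing R] {n ι : Type*} [Fintype n] [Fintype ι]
  [DecidableEq ι]

noncomputable def asymptoticCovariance (A : Matrix n n R) (X : Matrix n ι R) : Matrix n n R :=
  X * (Xᴴ * A * X)⁻¹ * Xᴴ

theorem asymptoticCovariance_mul_mul_of_eq_mul {κ : Type*} {A : Matrix n n R}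
    {X : Matrix n ι R} (hX : IsUnit (Xᴴ * A * X).det) {Y : Matrix n κ R} {Z : Matrix ι κ R}
    (hY : Y = X * Z) : asymptoticCovariance A X * A * Y = Y :=
  calc asymptoticCovariance A X * A * Y = X * ((Xᴴ * A * X)⁻¹ * (Xᴴ * A * X)) * Z := by
        simp only [asymptoticCovariance, hY, Matrix.mul_assoc]
    _ = Y := by rw [nonsing_inv_mul _ hX, Matrix.mul_one, hY]

theorem asymptoticCovariance_mul_mul_self {A : Matrix n n R} {X : Matrix n ι R}
    (hX : IsUnit (Xᴴ * A * X).det) :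
    asymptoticCovariance A X * A * asymptoticCovariance A X = asymptoticCovariance A X :=
  asymptoticCovariance_mul_mul_of_eq_mul hX (Matrix.mul_assoc _ _ _)

theorem isHermitian_asymptoticCovariance {A : Matrix n n R} (hA : A.IsHermitian)
    (X : Matrix n ι R) : (asymptoticCovariance A X).IsHermitian :=
  isHermitian_mul_mul_conjTranspose X (isHermitian_conjTranspose_mul_mul X hA).inv

end AsymptoticCovariance

theorem posSemidef_asymptoticCovariance_sub {K : Type*} [Field K] [PartialOrder K] [StarRing K]
    {n ι κ : Type*} [Fintype n] [Fintype ι] [DecidableEq ι] [Fintype κ] [DecidableEq κ]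
    {A : Matrix n n K} (hA : A.PosDef) {B : Matrix n κ K} (hB : Function.Injective B.mulVec)
    {C : Matrix n ι K} (hC : Function.Injective C.mulVec) {M : Matrix ι κ K} (hBCM : B = C * M) :
    (asymptoticCovariance A C - asymptoticCovariance A B).PosSemidef := by
  have hGB := (isUnit_iff_isUnit_det _).mp (hA.conjTranspose_mul_mul_same hB).isUnit
  have hGC := (isUnit_iff_isUnit_det _).mp (hA.conjTranspose_mul_mul_same hC).isUnit
  have hCB : asymptoticCovariance A C * A * asymptoticCovariance A B = asymptoticCovariance A B :=
    asymptoticCovariance_mul_mul_of_eq_mul hGC (Z := M * (Bᴴ * A * B)⁻¹ * Bᴴ) <| by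
      rw [asymptoticCovariance, hBCM]
      simp only [Matrix.mul_assoc]
  exact posSemidef_sub_of_mul_mul_eq hA.posSemidef
    (isHermitian_asymptoticCovariance hA.isHermitian B)
    (isHermitian_asymptoticCovariance hA.isHermitian C)
    (asymptoticCovariance_mul_mul_self hGB) (asymptoticCovariance_mul_mul_self hGC) hCB

end Matrix

theorem nested_asymptotic_covariance_le_general
    (n k m : ℕ)
    (A : Matrix (Fin n) (Fin n) ℝ) (hA : A.PosDef)
    (B : Matrix (Fin n) (Fin k) ℝ) (hB : B.rank = k)
    (C : Matrix (Fin n) (Fin m) ℝ) (hC : C.rank = m)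
    (M : Matrix (Fin m) (Fin k) ℝ) (hBCM : B = C * M) :
    (C * (Cᵀ * A * C)⁻¹ * Cᵀ - B * (Bᵀ * A * B)⁻¹ * Bᵀ).PosSemidef := by
  have hBinj := mulVec_injective_of_rank_eq_card (hB.trans (Fintype.card_fin k).symm)
  have hCinj := mulVec_injective_of_rank_eq_card (hC.trans (Fintype.card_fin m).symm)
  simpa only [asymptoticCovariance, conjTranspose_eq_transpose_of_trivial] using
    posSemidef_asymptoticCovariance_sub hA hBinj hCinj hBCM

/-- for positive definite `A` and nested full-rank Jacobians
`B = C * M`, the asymptotic covariance of the MLE in the smaller parameter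
space is dominated in the Loewner order by that in the larger one:
`B (BᵀAB)⁻¹ Bᵀ ≤ C (CᵀAC)⁻¹ Cᵀ`. -/
theorem nested_asymptotic_covariance_le
    (n k m : ℕ) (hkm : k ≤ m) (hmn : m ≤ n)
    (A : Matrix (Fin n) (Fin n) ℝ) (hA : A.PosDef)
    (B : Matrix (Fin n) (Fin k) ℝ) (hB : B.rank = k)
    (C : Matrix (Fin n) (Fin m) ℝ) (hC : C.rank = m)
    (M : Matrix (Fin m) (Fin k) ℝ) (hBCM : B = C * M) :
    (C * (Cᵀ * A * C)⁻¹ * Cᵀ - B * (Bᵀ * A * B)⁻¹ * Bᵀ).PosSemidef :=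
  nested_asymptotic_covariance_le_general n k m A hA B hB C hC M hBCM
end

section
/- Let n, N ≥ 1 and let X be a real n×N matrix whose rank is strictly less than n (equivalently, the columns of X do not span ℝⁿ). Then the Gaussian likelihood function L(Σ) = (det Σ)^{−N/2} (2π)^{−nN/2} exp(−(1/2) Tr(Σ⁻¹ X Xᵀ)), defined on the set of real n×n positive definite matrices Σ, is not bounded above: for every real number K there exists a positive definite Σ with L(Σ) > K. -/
open Matrix Real Filter Topology

/-!
If `rank X < n`, then `X Xᵀ` is singular, so some `v ≠ 0` satisfies `vᵀ X Xᵀ = 0`. Shrinking the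
identity by a factor `ε` along `v` gives a positive definite `Σ_ε` with `det Σ_ε = ε` and
`Σ_ε (X Xᵀ) = X Xᵀ`, hence `Σ_ε⁻¹ (X Xᵀ) = X Xᵀ`. So the trace term does not depend on `ε`,
and `L(Σ_ε) = ε ^ (-N/2) L(1) → ∞` as `ε → 0⁺`.
-/

noncomputable def gaussianLikelihood {n N : ℕ} (X : Matrix (Fin n) (Fin N) ℝ)
    (S : Matrix (Fin n) (Fin n) ℝ) : ℝ :=
  S.det ^ (-(N : ℝ) / 2) * (2 * π) ^ (-(n : ℝ) * N / 2) *
    Real.exp (-(1 / 2) * (S⁻¹ * (X * Xᵀ)).trace)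

lemma det_eq_zero_of_rank_lt {R m : Type*} [CommRing R] [IsDomain R] [Fintype m] [DecidableEq m]
    {A : Matrix m m R} (h : A.rank < Fintype.card m) : A.det = 0 := by
  by_contra hdet
  exact h.ne (rank_of_det_ne_zero hdet)

section lineScaling

variable {ι : Type*} [Fintype ι] [DecidableEq ι] {v : ι → ℝ}

/-- Multiplication by `ε` on the line `ℝ v`, the identity on its orthogonal complement. -/
noncomputable def lineScaling (v : ι → ℝ) (ε : ℝ) : Matrix ι ι ℝ :=
  1 - ((1 - ε) / (v ⬝ᵥ v)) • vecMulVec v v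

lemma isHermitian_lineScaling (v : ι → ℝ) (ε : ℝ) : (lineScaling v ε).IsHermitian := by
  simp [lineScaling, IsHermitian]

lemma lineScaling_mul_lineScaling (hv : v ≠ 0) (ε δ : ℝ) :
    lineScaling v ε * lineScaling v δ = lineScaling v (ε * δ) := by
  have hd : v ⬝ᵥ v ≠ 0 := by simpa [dotProduct_self_eq_zero] using hv
  have hsq : vecMulVec v v * vecMulVec v v = (v ⬝ᵥ v) • vecMulVec v v := by
    rw [vecMulVec_mul_vecMulVec, vecMulVec_smul]
  simp only [lineScaling, sub_mul, mul_sub, Matrix.one_mul, Matrix.mul_one, Matrix.smul_mul,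
    Matrix.mul_smul, hsq, smul_smul]
  have hcoeff : (1 - ε * δ) / (v ⬝ᵥ v) =
      (1 - ε) / (v ⬝ᵥ v) + (1 - δ) / (v ⬝ᵥ v) -
        (1 - δ) / (v ⬝ᵥ v) * ((1 - ε) / (v ⬝ᵥ v) * v ⬝ᵥ v) := by
    field_simp
    ring
  rw [hcoeff]
  module

lemma det_lineScaling (hv : v ≠ 0) (ε : ℝ) : (lineScaling v ε).det = ε := by
  have hd : v ⬝ᵥ v ≠ 0 := by simpa [dotProduct_self_eq_zero] using hv
  rw [lineScaling, vecMulVec_eq Unit, ← Matrix.smul_mul, det_one_sub_mul_comm, det_unique]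
  simp [div_mul_cancel₀ _ hd]

lemma posDef_lineScaling (hv : v ≠ 0) {ε : ℝ} (hε : 0 < ε) : (lineScaling v ε).PosDef := by
  have hroot : (lineScaling v √ε)ᴴ * lineScaling v √ε = lineScaling v ε := by
    rw [(isHermitian_lineScaling v √ε).eq, lineScaling_mul_lineScaling hv,
      Real.mul_self_sqrt hε.le]
  rw [← hroot]
  refine PosDef.conjTranspose_mul_self _ (mulVec_injective_iff_isUnit.mpr ?_)
  rw [isUnit_iff_isUnit_det, det_lineScaling hv]
  exact (Real.sqrt_pos.mpr hε).ne'.isUnit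

lemma lineScaling_mul_of_vecMul_eq_zero {κ : Type*} {A : Matrix ι κ ℝ} (hA : v ᵥ* A = 0)
    (ε : ℝ) : lineScaling v ε * A = A := by
  rw [lineScaling, Matrix.sub_mul, Matrix.one_mul, Matrix.smul_mul, vecMulVec_mul, hA]
  ext
  simp [vecMulVec_apply]

end lineScaling

section gaussianLikelihood

variable {n N : ℕ} {X : Matrix (Fin n) (Fin N) ℝ}

lemma gaussianLikelihood_pos {S : Matrix (Fin n) (Fin n) ℝ} (hS : S.PosDef) :
    0 < gaussianLikelihood X S := by
  unfold gaussianLikelihood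
  have := hS.det_pos
  positivity

lemma gaussianLikelihood_of_mul_eq {S : Matrix (Fin n) (Fin n) ℝ} (hS : IsUnit S.det)
    (h : S * (X * Xᵀ) = X * Xᵀ) :
    gaussianLikelihood X S = S.det ^ (-(N : ℝ) / 2) * gaussianLikelihood X 1 := by
  have hinv : S⁻¹ * (X * Xᵀ) = X * Xᵀ := by
    conv_lhs => rw [← h]
    rw [← Matrix.mul_assoc, nonsing_inv_mul _ hS, Matrix.one_mul]
  simp [gaussianLikelihood, hinv, mul_assoc]

end gaussianLikelihood

theorem gaussian_likelihood_unbounded_of_rank_deficient_general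
    (n N : ℕ) (hN : 1 ≤ N)
    (X : Matrix (Fin n) (Fin N) ℝ) (hrank : X.rank < n) :
    ∀ K : ℝ, ∃ S : Matrix (Fin n) (Fin n) ℝ, S.PosDef ∧
      K < S.det ^ (-(N : ℝ) / 2) * (2 * π) ^ (-(n : ℝ) * N / 2) *
            Real.exp (-(1 / 2) * (S⁻¹ * (X * Xᵀ)).trace) := by
  intro K
  obtain ⟨v, hv, hvX⟩ : ∃ v ≠ 0, v ᵥ* (X * Xᵀ) = 0 :=
    exists_vecMul_eq_zero_iff.mpr <| det_eq_zero_of_rank_lt <| by simpa using hrank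
  have hL : ∀ ε : ℝ, 0 < ε →
      gaussianLikelihood X (lineScaling v ε) = ε ^ (-(N : ℝ) / 2) * gaussianLikelihood X 1 := by
    intro ε hε
    rw [gaussianLikelihood_of_mul_eq (by simpa [det_lineScaling hv] using hε.ne')
      (lineScaling_mul_of_vecMul_eq_zero hvX ε), det_lineScaling hv]
  have hexponent : -(N : ℝ) / 2 < 0 := by
    have : (1 : ℝ) ≤ N := by exact_mod_cast hN
    linarith
  have hblowup : Tendsto (fun ε : ℝ => ε ^ (-(N : ℝ) / 2) * gaussianLikelihood X 1)
      (𝓝[>] 0) atTop :=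
    (tendsto_rpow_neg_nhdsGT_zero hexponent).atTop_mul_const (gaussianLikelihood_pos PosDef.one)
  obtain ⟨ε, hK, hε⟩ := ((hblowup.eventually_gt_atTop K).and self_mem_nhdsWithin).exists
  refine ⟨lineScaling v ε, posDef_lineScaling hv hε, ?_⟩
  show K < gaussianLikelihood X (lineScaling v ε)
  rwa [hL ε hε]

/-- if the sample matrix `X` (n×N) has rank < n, the Gaussian
likelihood `L(Σ) = (det Σ)^{-N/2} (2π)^{-nN/2} exp(-(1/2) Tr(Σ⁻¹ X Xᵀ))` is not
bounded above on the set of positive definite matrices. -/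
theorem gaussian_likelihood_unbounded_of_rank_deficient
    (n N : ℕ) (hn : 1 ≤ n) (hN : 1 ≤ N)
    (X : Matrix (Fin n) (Fin N) ℝ) (hrank : X.rank < n) :
    ∀ K : ℝ, ∃ S : Matrix (Fin n) (Fin n) ℝ, S.PosDef ∧
      K < S.det ^ (-(N : ℝ) / 2) * (2 * π) ^ (-(n : ℝ) * N / 2) *
            Real.exp (-(1 / 2) * (S⁻¹ * (X * Xᵀ)).trace) :=
  gaussian_likelihood_unbounded_of_rank_deficient_general n N hN X hrank
end
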